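/- Let n be a positive integer, μ ∈ ℂ^n a generic vector, and Δ a local derivation on the Witt algebra W_n = Der(ℂ[t_1^{±1},…,t_n^{±1}]) such that Δ(d_μ) = 0. Then for every α ∈ ℤ^n \ {0}, the element Δ(t^α d_μ) lies in the ℂ-linear span of the set {t^{kα} d_i : k ∈ ℤ, k ≥ 1, 1 ≤ i ≤ n}; in particular, all components of Δ(t^α d_μ) on t^{kα}𝔥 with k ≤ 0 vanish. -/

import Mathlib

open scoped BigOperators

noncomputable section

/-- The Laurent polynomial algebra `ℂ[t₁^{±1},…,tₙ^{±1}]`, realized as the group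
algebra of `ℤⁿ` over `ℂ`. -/
abbrev LaurentAlg (n : ℕ) : Type := AddMonoidAlgebra ℂ (Fin n → ℤ)

/-- The Witt algebra `Wₙ = Der(ℂ[t₁^{±1},…,tₙ^{±1}])`. -/
abbrev WittAlg (n : ℕ) : Type := Derivation ℂ (LaurentAlg n) (LaurentAlg n)

/-- Pairing `(μ, β) ↦ ∑ μᵢ βᵢ`. -/
def dotp {n : ℕ} (μ : Fin n → ℂ) (β : Fin n → ℤ) : ℂ := ∑ i, μ i * (β i : ℂ)

lemma dotp_add {n : ℕ} (μ : Fin n → ℂ) (β γ : Fin n → ℤ) :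
    dotp μ (β + γ) = dotp μ β + dotp μ γ := by
  simp [dotp, mul_add, Finset.sum_add_distrib]

lemma dotp_zero {n : ℕ} (μ : Fin n → ℂ) : dotp μ 0 = 0 := by simp [dotp]

/-- A vector `μ ∈ ℂⁿ` is generic if `μ·α ≠ 0` for all nonzero `α ∈ ℤⁿ`. -/
def IsGeneric {n : ℕ} (μ : Fin n → ℂ) : Prop :=
  ∀ α : Fin n → ℤ, α ≠ 0 → dotp μ α ≠ 0

/-- Underlying linear map of `t^α d_μ`. -/
def wdAux {n : ℕ} (μ : Fin n → ℂ) (α : Fin n → ℤ) : LaurentAlg n →ₗ[ℂ] LaurentAlg n :=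
  Finsupp.lsum ℂ (fun β => dotp μ β • AddMonoidAlgebra.lsingle (α + β)) ∘ₗ
    (AddMonoidAlgebra.coeffLinearEquiv ℂ).toLinearMap

lemma wdAux_single {n : ℕ} (μ : Fin n → ℂ) (α β : Fin n → ℤ) (c : ℂ) :
    wdAux μ α (AddMonoidAlgebra.single β c) = dotp μ β • AddMonoidAlgebra.single (α + β) c := by
  classical
  simp [wdAux, AddMonoidAlgebra.lsingle_apply, ← AddMonoidAlgebra.ofCoeff_single]

/-- The derivation `t^α d_μ` of the Laurent polynomial algebra, sending
`t^β ↦ (μ·β) t^{α+β}`.  In particular `wd μ 0 = d_μ` and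
`wd (Pi.single i 1) α = t^α dᵢ`. -/
def wd {n : ℕ} (μ : Fin n → ℂ) (α : Fin n → ℤ) : WittAlg n where
  toLinearMap := wdAux μ α
  map_one_eq_zero' := by
    rw [show (1 : LaurentAlg n) = AddMonoidAlgebra.single 0 1 from rfl, wdAux_single, dotp_zero,
      zero_smul]
  leibniz' := by
    intro a b
    show wdAux μ α (a * b) = a • wdAux μ α b + b • wdAux μ α a
    induction a using AddMonoidAlgebra.induction_linear with
    | zero => simp
    | add f g hf hg =>
        rw [add_mul, map_add, hf, hg, map_add]
        simp only [smul_eq_mul, add_mul, mul_add]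
        ring
    | single β c =>
      induction b using AddMonoidAlgebra.induction_linear with
      | zero => simp
      | add f g hf hg =>
          rw [mul_add, map_add, hf, hg, map_add]
          simp only [smul_eq_mul, add_mul, mul_add]
          ring
      | single γ d =>
          show wdAux μ α (AddMonoidAlgebra.single β c * AddMonoidAlgebra.single γ d) =
            AddMonoidAlgebra.single β c • wdAux μ α (AddMonoidAlgebra.single γ d)
            + AddMonoidAlgebra.single γ d • wdAux μ α (AddMonoidAlgebra.single β c)
          rw [AddMonoidAlgebra.single_mul_single, wdAux_single, wdAux_single, wdAux_single,
            smul_eq_mul, smul_eq_mul, mul_smul_comm, mul_smul_comm,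
            AddMonoidAlgebra.single_mul_single, AddMonoidAlgebra.single_mul_single,
            dotp_add, add_smul]
          rw [show β + (α + γ) = α + (β + γ) by abel, show γ + (α + β) = α + (β + γ) by abel,
            mul_comm d c, add_comm]

/-- A linear map `Δ` on a Lie algebra `L` is a local derivation if for each `x`
there is a Lie algebra derivation `Dₓ` with `Δ x = Dₓ x`. -/
def IsLocalDerivation {L : Type*} [LieRing L] [LieAlgebra ℂ L] (Δ : L →ₗ[ℂ] L) : Prop :=
  ∀ x : L, ∃ D : LieDerivation ℂ L L, Δ x = D x

end

/-! For each `c ∈ ℂ` locality gives a derivation `D` of `Wₙ` with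
`Δ(d_μ + c t^α d_μ) = D(d_μ + c t^α d_μ)`. Genericity of `μ` makes `D` agree on `d_μ` with an
inner derivation `⁅·, Y⁆`, and `D - ⁅·, Y⁆`, which kills `d_μ`, preserves the `ℤⁿ`-grading, so
`c Δ(t^α d_μ) ≡ ⁅d_μ + c t^α d_μ, Y⁆` modulo `t^α 𝔥`. On a coset `δₖ = δ₀ + kα` this is a
recursion `(μ·δₖ) yₖ + c Bₖ₋₁ yₖ₋₁ = c xₖ` between the coefficients of `Y` and of `Δ(t^α d_μ)`,
with `Bₖ` injective while `δₖ ∉ {0, α}`. Solved from below, it gives `yₖ → 0` as `c → 0`. At an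
index where `(μ·δₖ) yₖ = 0` for every `c` it reads `xₖ = Bₖ₋₁ yₖ₋₁`, so `xₖ = 0`, hence
`yₖ₋₁ = 0`, and the argument descends. Such an index is `δₖ = 0` on `ℤα`; off `ℤα` it is any `k`
beyond the support of `Δ(t^α d_μ)`, where `yₖ = 0` by running the recursion down from the top of
the support of `Y`. -/

section Recursion

open Filter Topology Function

variable {𝕜 V : Type*} [NontriviallyNormedField 𝕜] [NormedAddCommGroup V] [NormedSpace 𝕜 V]
  {lam : ℤ → 𝕜} {b : ℤ → V →L[𝕜] V} {X : ℤ → V}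

lemma exists_forall_lt_eq_zero_of_bddBelow {M : Type*} [Zero M] {f : ℤ → M}
    (h : BddBelow (support f)) : ∃ N, ∀ k < N, f k = 0 := by
  obtain ⟨N, hN⟩ := h
  exact ⟨N, fun k hk => notMem_support.mp fun h' => (hN h').not_gt hk⟩

lemma exists_forall_gt_eq_zero_of_bddAbove {M : Type*} [Zero M] {f : ℤ → M}
    (h : BddAbove (support f)) : ∃ N, ∀ k > N, f k = 0 := by
  obtain ⟨N, hN⟩ := h
  exact ⟨N, fun k hk => notMem_support.mp fun h' => (hN h').not_gt hk⟩

lemma eq_zero_of_lt_of_recursion {g : ℤ → V} {c : 𝕜} {N : ℤ} (hg : BddBelow (support g))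
    (hlam : ∀ k < N, lam k ≠ 0) (hX : ∀ k < N, X k = 0)
    (hrec : ∀ k < N, lam k • g k + c • b (k - 1) (g (k - 1)) = c • X k) :
    ∀ k < N, g k = 0 := by
  obtain ⟨M, hM⟩ := exists_forall_lt_eq_zero_of_bddBelow hg
  intro k hk
  by_cases hkM : k < M
  · exact hM k hkM
  refine Int.leInduction (m := M - 1) (motive := fun k _ => k < N → g k = 0)
    (fun _ => hM _ (by omega)) (fun j _ ih hj => ?_) k (by omega) hk
  have h := hrec (j + 1) hj
  rw [add_sub_cancel_right, ih (by omega), map_zero, smul_zero, add_zero, hX _ hj,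
    smul_zero] at h
  exact (smul_eq_zero.mp h).resolve_left (hlam _ hj)

lemma eq_zero_of_ge_of_recursion {g : ℤ → V} {c : 𝕜} {N : ℤ} (hc : c ≠ 0)
    (hg : BddAbove (support g)) (hb : ∀ k ≥ N, Injective (b k)) (hX : ∀ k > N, X k = 0)
    (hrec : ∀ k > N, lam k • g k + c • b (k - 1) (g (k - 1)) = c • X k) :
    ∀ k ≥ N, g k = 0 := by
  obtain ⟨M, hM⟩ := exists_forall_gt_eq_zero_of_bddAbove hg
  intro k hk
  by_cases hkM : M < k
  · exact hM k hkM
  refine Int.leInductionDown (m := M + 1) (motive := fun k _ => N ≤ k → g k = 0)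
    (fun _ => hM _ (by omega)) (fun j _ ih hj => ?_) k (by omega) hk
  have h := hrec j (by omega)
  rw [ih (by omega), smul_zero, zero_add, hX j (by omega)] at h
  exact (injective_iff_map_eq_zero _).mp (hb _ hj) _
    ((smul_eq_zero.mp (h.trans (smul_zero c))).resolve_left hc)

lemma tendsto_nhdsNE_zero_of_recursion {K N : ℤ} {G : 𝕜 → ℤ → V}
    (hG : ∀ c ≠ 0, BddBelow (support (G c))) (hlam : ∀ k < K, lam k ≠ 0)
    (hX : ∀ k < N, X k = 0)
    (hrec : ∀ c ≠ 0, ∀ k < K, lam k • G c k + c • b (k - 1) (G c (k - 1)) = c • X k) :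
    ∀ k < K, Tendsto (fun c => G c k) (𝓝[≠] 0) (𝓝 0) := by
  have hlow : ∀ k < min N K, Tendsto (fun c => G c k) (𝓝[≠] 0) (𝓝 0) := fun k hk =>
    tendsto_const_nhds.congr' (eventually_nhdsWithin_of_forall fun c hc =>
      (eq_zero_of_lt_of_recursion (hG c hc) (fun k hk => hlam k (by omega))
        (fun k hk => hX k (by omega)) (fun k hk => hrec c hc k (by omega)) k hk).symm)
  intro k hk
  by_cases hkN : k < min N K
  · exact hlow k hkN
  refine Int.leInduction (m := min N K - 1)
    (motive := fun k _ => k < K → Tendsto (fun c => G c k) (𝓝[≠] 0) (𝓝 0))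
    (fun _ => hlow _ (by omega)) (fun j _ ih hj => ?_) k (by omega) hk
  have hlim : Tendsto (fun c : 𝕜 => (lam (j + 1))⁻¹ • c • (X (j + 1) - b j (G c j)))
      (𝓝[≠] 0) (𝓝 0) := by
    simpa using ((tendsto_nhdsWithin_of_tendsto_nhds tendsto_id).smul
      (tendsto_const_nhds.sub (((b j).continuous.tendsto 0).comp (ih (by omega))))).const_smul
      (lam (j + 1))⁻¹
  refine hlim.congr' (eventually_nhdsWithin_of_forall fun c hc => ?_)
  have h := hrec c hc (j + 1) hj
  rw [add_sub_cancel_right, ← eq_sub_iff_add_eq, ← smul_sub] at h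
  rw [← h, inv_smul_smul₀ (hlam _ hj)]

theorem eq_zero_of_forall_recursion {K : ℤ} {G : 𝕜 → ℤ → V} (hlam : ∀ k < K, lam k ≠ 0)
    (hb : ∀ k < K, Injective (b k)) (hX : BddBelow (support X))
    (hG : ∀ c ≠ 0, BddBelow (support (G c)))
    (hrec : ∀ c ≠ 0, ∀ k ≤ K, lam k • G c k + c • b (k - 1) (G c (k - 1)) = c • X k)
    (hK : ∀ c ≠ 0, lam K • G c K = 0) :
    ∀ k ≤ K, X k = 0 := by
  obtain ⟨N, hN⟩ := exists_forall_lt_eq_zero_of_bddBelow hX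
  have hlim := tendsto_nhdsNE_zero_of_recursion hG hlam hN fun c hc k hk => hrec c hc k hk.le
  have step : ∀ j ≤ K, (∀ c ≠ 0, lam j • G c j = 0) →
      X j = 0 ∧ ∀ c ≠ 0, lam (j - 1) • G c (j - 1) = 0 := by
    intro j hj hGj
    have hanchor : ∀ c ≠ 0, b (j - 1) (G c (j - 1)) = X j := fun c hc =>
      smul_right_injective V hc (by
        change c • _ = c • _
        rw [← hrec c hc j hj, hGj c hc, zero_add])
    have hto0 : Tendsto (fun c => b (j - 1) (G c (j - 1))) (𝓝[≠] 0) (𝓝 0) :=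
      map_zero (b (j - 1)) ▸ ((b (j - 1)).continuous.tendsto 0).comp (hlim (j - 1) (by omega))
    have htoX : Tendsto (fun c => b (j - 1) (G c (j - 1))) (𝓝[≠] 0) (𝓝 (X j)) :=
      tendsto_const_nhds.congr' (eventually_nhdsWithin_of_forall fun c hc => (hanchor c hc).symm)
    have hXj : X j = 0 := tendsto_nhds_unique htoX hto0
    refine ⟨hXj, fun c hc => ?_⟩
    rw [(injective_iff_map_eq_zero _).mp (hb _ (by omega)) _ ((hanchor c hc).trans hXj),
      smul_zero]
  intro k hk
  exact (step k hk (Int.leInductionDown (motive := fun j _ => ∀ c ≠ 0, lam j • G c j = 0) hK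
    (fun j hj ih => (step j hj ih).2) k hk)).1

end Recursion

noncomputable section

namespace Witt

open AddMonoidAlgebra (single)

variable {n : ℕ}

lemma dotp_smul_left (a : ℂ) (u : Fin n → ℂ) (β : Fin n → ℤ) :
    dotp (a • u) β = a * dotp u β := by
  simp [dotp, Finset.mul_sum, mul_assoc]

lemma dotp_add_left (u v : Fin n → ℂ) (β : Fin n → ℤ) :
    dotp (u + v) β = dotp u β + dotp v β := by
  simp [dotp, add_mul, Finset.sum_add_distrib]

lemma dotp_sub (μ : Fin n → ℂ) (β γ : Fin n → ℤ) :
    dotp μ (β - γ) = dotp μ β - dotp μ γ := by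
  simp [dotp, Finset.sum_sub_distrib, mul_sub]

lemma dotp_single (u : Fin n → ℂ) (i : Fin n) : dotp u (Pi.single i 1) = u i := by
  simp [dotp, Pi.single_apply]

/-- The coefficient of `t^δ 𝔥` in `D`, read off from `D tᵢ = ∑_δ (coeff δ D)ᵢ t^{δ + eᵢ}`. -/
def coeff (δ : Fin n → ℤ) : WittAlg n →ₗ[ℂ] (Fin n → ℂ) where
  toFun D i := (D (single (Pi.single i 1) 1)).coeff (δ + Pi.single i 1)
  map_add' _ _ := rfl
  map_smul' _ _ := rfl

/-- By the Leibniz rule `γ ↦ t^{-γ} D(t^γ)` is additive, so `D` is determined on all monomials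
by the `D tᵢ`. -/
def logDerivHom (D : WittAlg n) : (Fin n → ℤ) →+ LaurentAlg n where
  toFun γ := single (-γ) 1 * D (single γ 1)
  map_zero' := by
    rw [show (single 0 1 : LaurentAlg n) = 1 from rfl, Derivation.map_one_eq_zero, mul_zero]
  map_add' γ γ' := by
    have hinv : ∀ β : Fin n → ℤ, single (-β) (1 : ℂ) * single β 1 = 1 := fun β => by
      rw [AddMonoidAlgebra.single_mul_single, neg_add_cancel, mul_one]; rfl
    have hadd : ∀ β β' : Fin n → ℤ, single (β + β') (1 : ℂ) = single β 1 * single β' 1 :=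
      fun β β' => by rw [AddMonoidAlgebra.single_mul_single, mul_one]
    rw [neg_add, hadd, hadd, Derivation.leibniz, smul_eq_mul, smul_eq_mul]
    linear_combination (single (-γ') 1 * D (single γ' 1)) * hinv γ +
      (single (-γ) 1 * D (single γ 1)) * hinv γ'

lemma logDerivHom_apply (D : WittAlg n) (γ : Fin n → ℤ) :
    logDerivHom D γ = single (-γ) 1 * D (single γ 1) := rfl

lemma apply_single_eq_single_mul_logDerivHom (D : WittAlg n) (γ : Fin n → ℤ) :
    D (single γ 1) = single γ 1 * logDerivHom D γ := by
  rw [logDerivHom_apply, ← mul_assoc, AddMonoidAlgebra.single_mul_single, add_neg_cancel, mul_one]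
  exact (one_mul _).symm

lemma coeff_logDerivHom (D : WittAlg n) (γ δ : Fin n → ℤ) :
    (logDerivHom D γ).coeff δ = dotp (coeff δ D) γ := by
  conv_lhs => rw [← Finset.univ_sum_single γ]
  simp only [map_sum, AddMonoidAlgebra.coeff_sum, Finsupp.finsetSum_apply, dotp]
  refine Finset.sum_congr rfl fun i _ => ?_
  have hsingle : Pi.single i (γ i) = γ i • (Pi.single i 1 : Fin n → ℤ) := by
    rw [← Pi.single_smul', smul_eq_mul, mul_one]
  rw [hsingle, map_zsmul, AddMonoidAlgebra.coeff_smul_apply, zsmul_eq_mul, mul_comm,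
    logDerivHom_apply, AddMonoidAlgebra.coeff_single_mul_apply, one_mul, neg_neg, add_comm]
  rfl

lemma coeff_apply_single (D : WittAlg n) (γ δ : Fin n → ℤ) :
    (D (single γ 1)).coeff (δ + γ) = dotp (coeff δ D) γ := by
  rw [apply_single_eq_single_mul_logDerivHom, AddMonoidAlgebra.coeff_single_mul_apply, one_mul,
    neg_add_cancel_comm_assoc, coeff_logDerivHom]

lemma ext_coeff {D₁ D₂ : WittAlg n} (h : ∀ δ, coeff δ D₁ = coeff δ D₂) : D₁ = D₂ := by
  apply Derivation.ext
  intro a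
  induction a using AddMonoidAlgebra.induction_linear with
  | zero => simp
  | add f g hf hg => rw [map_add, map_add, hf, hg]
  | single γ c =>
    rw [← mul_one c, ← smul_eq_mul, ← AddMonoidAlgebra.smul_single, Derivation.map_smul,
      Derivation.map_smul]
    congr 1
    ext ρ
    rw [← sub_add_cancel ρ γ, coeff_apply_single, coeff_apply_single, h]

lemma wd_single (u : Fin n → ℂ) (α β : Fin n → ℤ) (c : ℂ) :
    wd u α (single β c) = dotp u β • single (α + β) c :=
  wdAux_single u α β c

lemma coeff_wd_apply (v : Fin n → ℂ) (β ρ : Fin n → ℤ) (y : LaurentAlg n) :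
    (wd v β y).coeff ρ = dotp v (ρ - β) * y.coeff (ρ - β) := by
  induction y using AddMonoidAlgebra.induction_linear with
  | zero => simp
  | add f g hf hg =>
    rw [map_add, AddMonoidAlgebra.coeff_add, AddMonoidAlgebra.coeff_add, Finsupp.add_apply,
      Finsupp.add_apply, hf, hg, mul_add]
  | single γ c =>
    rw [wd_single, AddMonoidAlgebra.coeff_smul_apply, AddMonoidAlgebra.coeff_single,
      AddMonoidAlgebra.coeff_single, Finsupp.single_apply, Finsupp.single_apply]
    by_cases h : γ = ρ - β
    · subst h
      simp
    · have h' : β + γ ≠ ρ := fun h' => h (eq_sub_of_add_eq' h')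
      simp [h, h']

lemma coeff_wd (u : Fin n → ℂ) (γ δ : Fin n → ℤ) :
    coeff δ (wd u γ) = if δ = γ then u else 0 := by
  funext i
  show (wd u γ (single (Pi.single i 1) 1)).coeff (δ + Pi.single i 1) = _
  rw [coeff_wd_apply, AddMonoidAlgebra.coeff_single, Finsupp.single_apply]
  by_cases h : δ = γ
  · subst h
    simp [dotp_single]
  · have h' : Pi.single i 1 ≠ δ + Pi.single i 1 - γ := fun h' =>
      h (by rw [eq_sub_iff_add_eq, add_comm, add_left_inj] at h'; exact h'.symm)
    simp [h, h']

/-- The bracket `⁅t^β d_v, t^γ u⁆ = t^{β+γ} (adShift v β γ u)`. -/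
def adShift (v : Fin n → ℂ) (β γ : Fin n → ℤ) : (Fin n → ℂ) →L[ℂ] (Fin n → ℂ) :=
  LinearMap.toContinuousLinearMap
    { toFun := fun u => dotp v γ • u - dotp u β • v
      map_add' := fun u u' => by rw [dotp_add_left, smul_add, add_smul]; abel
      map_smul' := fun a u => by
        rw [dotp_smul_left, RingHom.id_apply, smul_sub, smul_comm, mul_smul] }

lemma adShift_apply (v : Fin n → ℂ) (β γ : Fin n → ℤ) (u : Fin n → ℂ) :
    adShift v β γ u = dotp v γ • u - dotp u β • v := rfl

lemma coeff_lie_wd (v : Fin n → ℂ) (β δ : Fin n → ℤ) (E : WittAlg n) :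
    coeff δ ⁅wd v β, E⁆ = adShift v β (δ - β) (coeff (δ - β) E) := by
  funext i
  show (wd v β (E (single (Pi.single i 1) 1)) - E (wd v β (single (Pi.single i 1) 1))).coeff
    (δ + Pi.single i 1) = _
  rw [wd_single, Derivation.map_smul, AddMonoidAlgebra.coeff_sub, Finsupp.sub_apply,
    coeff_wd_apply, AddMonoidAlgebra.coeff_smul_apply,
    show δ + Pi.single i 1 = (δ - β) + (β + Pi.single i 1) by abel, coeff_apply_single,
    show δ - β + (β + Pi.single i 1) - β = δ - β + Pi.single i 1 by abel]
  simp only [adShift_apply, dotp_add, dotp_single, Pi.sub_apply, Pi.smul_apply, smul_eq_mul]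
  change _ * coeff (δ - β) E i - _ = _
  ring

lemma coeff_lie_wd_zero (μ : Fin n → ℂ) (δ : Fin n → ℤ) (E : WittAlg n) :
    coeff δ ⁅wd μ 0, E⁆ = dotp μ δ • coeff δ E := by
  rw [coeff_lie_wd, sub_zero, adShift_apply, dotp_zero, zero_smul, sub_zero]

lemma lie_wd_zero_wd (μ v : Fin n → ℂ) (β : Fin n → ℤ) :
    ⁅wd μ 0, wd v β⁆ = dotp μ β • wd v β := by
  refine ext_coeff fun δ => ?_
  rw [coeff_lie_wd_zero, map_smul, coeff_wd]
  split_ifs with h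
  · rw [h]
  · rw [smul_zero, smul_zero]

lemma finite_support_coeff (D : WittAlg n) : (Function.support fun δ => coeff δ D).Finite := by
  refine (Set.finite_iUnion fun i =>
    ((D (single (Pi.single i 1) 1)).coeff.support.finite_toSet.image (· - Pi.single i 1))).subset
    fun δ hδ => ?_
  obtain ⟨i, hi⟩ := Function.ne_iff.mp hδ
  exact Set.mem_iUnion.mpr ⟨i, δ + Pi.single i 1, Finsupp.mem_support_iff.mpr hi,
    add_sub_cancel_right _ _⟩

lemma coeff_sum_wd (s : Finset (Fin n → ℤ)) (f : (Fin n → ℤ) → Fin n → ℂ) (δ : Fin n → ℤ) :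
    coeff δ (∑ γ ∈ s, wd (f γ) γ) = if δ ∈ s then f δ else 0 := by
  simp only [map_sum, coeff_wd, Finset.sum_ite_eq]

lemma sum_wd_coeff (D : WittAlg n) {s : Finset (Fin n → ℤ)} (hs : ∀ δ ∉ s, coeff δ D = 0) :
    ∑ δ ∈ s, wd (coeff δ D) δ = D :=
  ext_coeff fun δ => by
    rw [coeff_sum_wd]
    split_ifs with h
    · rfl
    · exact (hs δ h).symm

lemma wd_eq_sum_smul_wd_single (u : Fin n → ℂ) (γ : Fin n → ℤ) :
    wd u γ = ∑ i, u i • wd (Pi.single i 1) γ := by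
  refine ext_coeff fun δ => ?_
  simp only [map_sum, map_smul, coeff_wd, smul_ite, smul_zero]
  split_ifs
  · simp only [← Pi.single_smul', smul_eq_mul, mul_one, Finset.univ_sum_single]
  · simp

lemma wd_zero_left (β : Fin n → ℤ) : wd (0 : Fin n → ℂ) β = 0 :=
  ext_coeff fun δ => by rw [coeff_wd, map_zero, ite_self]

lemma coeff_zero_apply_wd_zero (D : LieDerivation ℂ (WittAlg n) (WittAlg n)) (μ : Fin n → ℂ) :
    coeff 0 (D (wd μ 0)) = 0 := by
  funext i
  have h := congrArg (coeff (Pi.single i 1))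
    (D.apply_lie_eq_add (wd μ 0) (wd (Pi.single i 1) (Pi.single i 1)))
  rw [lie_wd_zero_wd, map_smul, map_smul, map_add, coeff_lie_wd_zero, ← lie_skew, map_neg,
    coeff_lie_wd, sub_self, adShift_apply, dotp_zero, zero_smul, zero_sub, neg_neg,
    left_eq_add] at h
  simpa [dotp_single] using congrFun h i

lemma exists_lie_wd_zero_eq {μ : Fin n → ℂ} (hμ : IsGeneric μ) {E : WittAlg n}
    (hE : coeff 0 E = 0) : ∃ Y, ⁅wd μ 0, Y⁆ = E := by
  set s := (finite_support_coeff E).toFinset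
  refine ⟨∑ δ ∈ s, wd ((dotp μ δ)⁻¹ • coeff δ E) δ, ext_coeff fun δ => ?_⟩
  rw [coeff_lie_wd_zero, coeff_sum_wd]
  by_cases hδ : δ = 0
  · rw [hδ, dotp_zero, zero_smul, hE]
  split_ifs with hs
  · exact smul_inv_smul₀ (hμ δ hδ) _
  · rw [smul_zero, eq_comm, ← Function.notMem_support]
    exact fun h => hs ((Set.Finite.mem_toFinset _).mpr h)

lemma exists_apply_wd_eq_wd {μ : Fin n → ℂ} (hμ : IsGeneric μ)
    {D : LieDerivation ℂ (WittAlg n) (WittAlg n)} (hD : D (wd μ 0) = 0)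
    (v : Fin n → ℂ) (β : Fin n → ℤ) : ∃ ζ, D (wd v β) = wd ζ β := by
  refine ⟨coeff β (D (wd v β)), ext_coeff fun δ => ?_⟩
  rw [coeff_wd]
  split_ifs with h
  · rw [h]
  have h1 := congrArg (coeff δ) (D.apply_lie_eq_add (wd μ 0) (wd v β))
  rw [lie_wd_zero_wd, map_smul, hD, zero_lie, add_zero, map_smul, coeff_lie_wd_zero] at h1
  have h2 : dotp μ (δ - β) • coeff δ (D (wd v β)) = 0 := by rw [dotp_sub, sub_smul, h1, sub_self]
  exact (smul_eq_zero.mp h2).resolve_left (hμ _ (sub_ne_zero.mpr h))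

lemma exists_lieDerivation_apply_eq {μ : Fin n → ℂ} (hμ : IsGeneric μ)
    (D : LieDerivation ℂ (WittAlg n) (WittAlg n)) (α : Fin n → ℤ) :
    ∃ (Y : WittAlg n) (ζ : Fin n → ℂ),
      D (wd μ 0) = ⁅wd μ 0, Y⁆ ∧ D (wd μ α) = wd ζ α + ⁅wd μ α, Y⁆ := by
  obtain ⟨Y, hY⟩ := exists_lie_wd_zero_eq hμ (coeff_zero_apply_wd_zero D μ)
  set D' := D - LieDerivation.inner ℂ (WittAlg n) (WittAlg n) Y
  have hD' : ∀ x, D x = D' x + ⁅x, Y⁆ := fun x => by simp [D']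
  obtain ⟨ζ, hζ⟩ := exists_apply_wd_eq_wd hμ (D := D') (by simp [D', hY]) μ α
  exact ⟨Y, ζ, hY.symm, by rw [hD', hζ]⟩

lemma adShift_injective {μ : Fin n → ℂ} (hμ : IsGeneric μ) {α γ : Fin n → ℤ} (h0 : γ ≠ 0)
    (hα : γ ≠ α) : Function.Injective (adShift μ α γ) := by
  rw [injective_iff_map_eq_zero]
  intro u hu
  rw [adShift_apply, sub_eq_zero] at hu
  have h1 : dotp u α * dotp μ (γ - α) = 0 := by
    have h := congrArg (dotp · α) hu
    simp only [dotp_smul_left] at h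
    rw [dotp_sub]
    linear_combination h
  have h2 : dotp u α = 0 := (mul_eq_zero.mp h1).resolve_right (hμ _ (sub_ne_zero.mpr hα))
  rw [h2, zero_smul] at hu
  exact (smul_eq_zero.mp hu).resolve_left (hμ _ h0)

lemma exists_smul_apply_eq {μ : Fin n → ℂ} (hμ : IsGeneric μ) {Δ : WittAlg n →ₗ[ℂ] WittAlg n}
    (hΔ : IsLocalDerivation Δ) (h0 : Δ (wd μ 0) = 0) (α : Fin n → ℤ) (c : ℂ) :
    ∃ (ζ : Fin n → ℂ) (Y : WittAlg n),
      c • Δ (wd μ α) = c • wd ζ α + ⁅wd μ 0 + c • wd μ α, Y⁆ := by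
  obtain ⟨D, hD⟩ := hΔ (wd μ 0 + c • wd μ α)
  obtain ⟨Y, ζ, h1, h2⟩ := exists_lieDerivation_apply_eq hμ D α
  refine ⟨ζ, Y, ?_⟩
  rw [← zero_add (c • Δ _), ← h0, ← map_smul, ← map_add, hD, map_add, map_smul, h1, h2,
    add_lie (wd μ 0) (c • wd μ α) Y, smul_lie c (wd μ α) Y, smul_add]
  abel

lemma coeff_recursion_line {μ ζ : Fin n → ℂ} {α : Fin n → ℤ} {c : ℂ} {X Y : WittAlg n}
    (h : c • X = c • wd ζ α + ⁅wd μ 0 + c • wd μ α, Y⁆) (δ₀ : Fin n → ℤ) {k : ℤ}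
    (hk : δ₀ + k • α ≠ α) :
    dotp μ (δ₀ + k • α) • coeff (δ₀ + k • α) Y +
      c • adShift μ α (δ₀ + (k - 1) • α) (coeff (δ₀ + (k - 1) • α) Y) =
      c • coeff (δ₀ + k • α) X := by
  have h' := congrArg (coeff (δ₀ + k • α)) h
  rw [map_smul, map_add, map_smul, coeff_wd, if_neg hk, smul_zero, zero_add,
    add_lie (wd μ 0) (c • wd μ α) Y, smul_lie c (wd μ α) Y, map_add, map_smul, coeff_lie_wd_zero,
    coeff_lie_wd,
    show δ₀ + k • α - α = δ₀ + (k - 1) • α by rw [sub_smul, one_smul, add_sub_assoc]] at h'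
  exact h'.symm

lemma finite_support_coeff_line (D : WittAlg n) {α : Fin n → ℤ} (hα : α ≠ 0)
    (δ₀ : Fin n → ℤ) : (Function.support fun k : ℤ => coeff (δ₀ + k • α) D).Finite :=
  (finite_support_coeff D).preimage ((add_right_injective δ₀).comp (smul_left_injective ℤ hα)).injOn

lemma coeff_eq_zero_of_line {μ : Fin n → ℂ} (hμ : IsGeneric μ) {α : Fin n → ℤ} (hα : α ≠ 0)
    {X : WittAlg n} {ζ : ℂ → Fin n → ℂ} {Y : ℂ → WittAlg n}
    (hY : ∀ c, c • X = c • wd (ζ c) α + ⁅wd μ 0 + c • wd μ α, Y c⁆) (δ₀ : Fin n → ℤ) (K : ℤ)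
    (hne0 : ∀ k < K, δ₀ + k • α ≠ 0) (hneα : ∀ k ≤ K, δ₀ + k • α ≠ α)
    (hK : ∀ c ≠ 0, dotp μ (δ₀ + K • α) • coeff (δ₀ + K • α) (Y c) = 0) :
    ∀ k ≤ K, coeff (δ₀ + k • α) X = 0 :=
  eq_zero_of_forall_recursion (b := fun k => adShift μ α (δ₀ + k • α))
    (fun k hk => hμ _ (hne0 k hk)) (fun k hk => adShift_injective hμ (hne0 k hk) (hneα k hk.le))
    (finite_support_coeff_line X hα δ₀).bddBelow
    (fun c _ => (finite_support_coeff_line (Y c) hα δ₀).bddBelow)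
    (fun c _ k hk => coeff_recursion_line (hY c) δ₀ (hneα k hk)) hK

lemma coeff_eq_zero_of_forall_ne_smul {μ : Fin n → ℂ} (hμ : IsGeneric μ) {α : Fin n → ℤ}
    (hα : α ≠ 0) {X : WittAlg n} {ζ : ℂ → Fin n → ℂ} {Y : ℂ → WittAlg n}
    (hY : ∀ c, c • X = c • wd (ζ c) α + ⁅wd μ 0 + c • wd μ α, Y c⁆) {δ : Fin n → ℤ}
    (hδ : ∀ k : ℤ, δ ≠ k • α) : coeff δ X = 0 := by
  have hne0 : ∀ k : ℤ, δ + k • α ≠ 0 := fun k h =>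
    hδ (-k) (by rw [neg_smul]; exact eq_neg_of_add_eq_zero_left h)
  have hneα : ∀ k : ℤ, δ + k • α ≠ α := fun k h =>
    hδ (1 - k) (by rw [sub_smul, one_smul]; exact eq_sub_of_add_eq h)
  obtain ⟨N, hN⟩ := exists_forall_gt_eq_zero_of_bddAbove (finite_support_coeff_line X hα δ).bddAbove
  have hK : ∀ c ≠ 0, coeff (δ + (max N 0 + 1) • α) (Y c) = 0 := fun c hc =>
    eq_zero_of_ge_of_recursion (b := fun k => adShift μ α (δ + k • α)) (N := max N 0) hc
      (finite_support_coeff_line (Y c) hα δ).bddAbove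
      (fun k _ => adShift_injective hμ (hne0 k) (hneα k)) (fun k hk => hN k (by omega))
      (fun k _ => coeff_recursion_line (hY c) δ (hneα k)) _ (by omega)
  simpa using coeff_eq_zero_of_line hμ hα hY δ (max N 0 + 1) (fun k _ => hne0 k)
    (fun k _ => hneα k) (fun c hc => by rw [hK c hc, smul_zero]) 0 (by omega)

lemma coeff_eq_zero_off_positive_ray {μ : Fin n → ℂ} (hμ : IsGeneric μ)
    {α : Fin n → ℤ} (hα : α ≠ 0) {X : WittAlg n} {ζ : ℂ → Fin n → ℂ} {Y : ℂ → WittAlg n}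
    (hY : ∀ c, c • X = c • wd (ζ c) α + ⁅wd μ 0 + c • wd μ α, Y c⁆) {δ : Fin n → ℤ}
    (hδ : ¬ ∃ k : ℤ, 1 ≤ k ∧ δ = k • α) : coeff δ X = 0 := by
  by_cases hline : ∃ k : ℤ, δ = k • α
  · obtain ⟨k₀, rfl⟩ := hline
    have hk₀ : k₀ ≤ 0 := by
      by_contra h
      exact hδ ⟨k₀, by omega, rfl⟩
    have hsmul : ∀ {k : ℤ}, k • α = α → k = 1 := fun h =>
      smul_left_injective ℤ hα (h.trans (one_smul ℤ α).symm)
    simpa using coeff_eq_zero_of_line hμ hα hY 0 0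
      (fun k hk => by simpa using smul_ne_zero hk.ne hα)
      (fun k hk h => by have := hsmul (by simpa using h); omega)
      (fun c _ => by simp [dotp_zero]) k₀ hk₀
  · push Not at hline
    exact coeff_eq_zero_of_forall_ne_smul hμ hα hY hline

lemma mem_span_of_coeff_eq_zero {α : Fin n → ℤ} {D : WittAlg n}
    (h : ∀ δ, (¬ ∃ k : ℤ, 1 ≤ k ∧ δ = k • α) → coeff δ D = 0) :
    D ∈ Submodule.span ℂ
      {x : WittAlg n | ∃ (k : ℤ), 1 ≤ k ∧ ∃ i : Fin n, x = wd (Pi.single i 1) (k • α)} := by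
  rw [← sum_wd_coeff D (s := (finite_support_coeff D).toFinset) fun δ hδ => by simpa using hδ]
  refine Submodule.sum_mem _ fun δ _ => ?_
  by_cases hray : ∃ k : ℤ, 1 ≤ k ∧ δ = k • α
  · obtain ⟨k, hk, rfl⟩ := hray
    rw [wd_eq_sum_smul_wd_single]
    exact Submodule.sum_mem _ fun i _ =>
      Submodule.smul_mem _ _ (Submodule.subset_span ⟨k, hk, i, rfl⟩)
  · rw [h δ hray, wd_zero_left]
    exact Submodule.zero_mem _

end Witt

end

theorem local_derivation_supported_on_positive_ray_general (n : ℕ)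
    (μ : Fin n → ℂ) (hμ : IsGeneric μ)
    (Δ : WittAlg n →ₗ[ℂ] WittAlg n) (hΔ : IsLocalDerivation Δ)
    (h0 : Δ (wd μ 0) = 0) :
    ∀ α : Fin n → ℤ, α ≠ 0 →
      Δ (wd μ α) ∈ Submodule.span ℂ
        {x : WittAlg n | ∃ (k : ℤ), 1 ≤ k ∧ ∃ i : Fin n, x = wd (Pi.single i 1) (k • α)} := by
  intro α hα
  choose ζ Y hY using Witt.exists_smul_apply_eq hμ hΔ h0 α
  exact Witt.mem_span_of_coeff_eq_zero fun δ hδ =>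
    Witt.coeff_eq_zero_off_positive_ray hμ hα hY hδ

/-- If `Δ` is a local derivation on `Wₙ` with `Δ(d_μ) = 0` (`μ` generic),
then for every `α ∈ ℤⁿ \ {0}`, `Δ(t^α d_μ)` lies in the span of
`{t^{kα} dᵢ : k ∈ ℤ, k ≥ 1, i}`. -/
theorem local_derivation_supported_on_positive_ray (n : ℕ) (hn : 0 < n)
    (μ : Fin n → ℂ) (hμ : IsGeneric μ)
    (Δ : WittAlg n →ₗ[ℂ] WittAlg n) (hΔ : IsLocalDerivation Δ)
    (h0 : Δ (wd μ 0) = 0) :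
    ∀ α : Fin n → ℤ, α ≠ 0 →
      Δ (wd μ α) ∈ Submodule.span ℂ
        {x : WittAlg n | ∃ (k : ℤ), 1 ≤ k ∧ ∃ i : Fin n, x = wd (Pi.single i 1) (k • α)} :=
  local_derivation_supported_on_positive_ray_general n μ hμ Δ hΔ h0
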